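/- In the extended model with transmission success probability p ∈ (0, 1], write p̄ = 1 − p, let S_l = (1/(aBN))·Σ_{k=1}^{aBN} α^{[l]}_k, let E = Σ_{l=0}^{∞} p·p̄^l·S_l be the expected Age-of-Information and Ê = (B' + N' − n)/2 + K + (p̄/p)·N' its approximation. Then the relative approximation error satisfies |E − Ê| / E ≤ a·b / ( (B−1)·a·b + n·(a·N − 1) + 2·(K + (p̄/p)·N') ). -/

import Mathlib

/-- The `l`-failure Age-of-Information sequence of the extended model. -/
def aoiExt (A' B' N' ΔB ΔN : ℤ) (l k : ℕ) : ℤ :=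
  2 + (l : ℤ) * N' + ((k : ℤ) * A' - ΔN - 1) % N' +
    (((k : ℤ) * A' - ΔB - 2 - (l : ℤ) * N') % B' -
      ((k : ℤ) * A' - ΔN - 1) % N') % B'

/-- The constant `K = 2 + (Δ_N + 1) %̄ n` where `x %̄ m = ⌈x/m⌉·m − x`. -/
def extK (ΔN n : ℕ) : ℤ :=
  2 + (⌈(((ΔN : ℚ) + 1)) / (n : ℚ)⌉ * n - ((ΔN : ℤ) + 1))

/-- The mean of the `l`-failure AoI sequence of the extended model over one
period, as a real number. -/
noncomputable def meanAoiExt (A B N a b n ΔB ΔN : ℕ) (l : ℕ) : ℝ :=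
  (1 / ((a : ℝ) * B * N)) *
    ∑ k ∈ Finset.Icc 1 (a * B * N),
      ((aoiExt (A * b * n : ℤ) (B * a * b : ℤ) (N * a * n : ℤ)
          (ΔB : ℤ) (ΔN : ℤ) l k : ℤ) : ℝ)

/-- The expected Age-of-Information of the extended model,
`E = Σ_l p·p̄^l·S_l`. -/
noncomputable def expAoiExt (A B N a b n ΔB ΔN : ℕ) (p : ℝ) : ℝ :=
  ∑' l : ℕ, p * (1 - p) ^ l * meanAoiExt A B N a b n ΔB ΔN l

/-!
Write `α_k = 2 + l·N' + x_k + q_k` with `x_k = (k·A' − Δ_N − 1) % N'` and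
`q_k = (k·A' − Δ_B − 2 − l·N' − x_k) % B'`. Over one period
`k = 1, …, aBN`, since `gcd(A', N') = n` the residues `x_k` run `B` times through the class of
`−Δ_N − 1` modulo `n` in `[0, N')`; for `k` in a fixed class modulo `aN`, the residues `q_k` run
through a whole class modulo `ab` in `[0, B')`, because `gcd(aN·A', B') = ab`. All sums are then
explicit except one residue modulo `ab` per class, which lies in `[0, ab − 1]`, so
`S_l = (B' + N' − n)/2 + K + l·N' ± ab/2`. Averaging over the geometric law of `l` gives
`|E − Ê| ≤ ab/2`, and `E ≥ Ê − ab/2` turns this into the relative bound.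
-/

open Finset

theorem Int.emod_mul_eq_emod_add_mul (x : ℤ) (g P : ℕ) :
    x % (g * P : ℤ) = x % g + g * (x / g % P) := by
  rcases Nat.eq_zero_or_pos g with rfl | hg
  · simp
  rcases Nat.eq_zero_or_pos P with rfl | hP
  · simp [Int.emod_def]
  have hg' : (0 : ℤ) < g := by exact_mod_cast hg
  have hP' : (0 : ℤ) < P := by exact_mod_cast hP
  have hx : x = (x % g + g * (x / g % P)) + (g * P : ℤ) * (x / g / P) := by
    linear_combination (-1 : ℤ) * Int.emod_add_mul_ediv x g - g * Int.emod_add_mul_ediv (x / g) P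
  have h₁ := Int.emod_nonneg x hg'.ne'
  have h₂ := Int.emod_nonneg (x / g) hP'.ne'
  have h₃ := Int.emod_lt_of_pos x hg'
  have h₄ := Int.emod_lt_of_pos (x / g) hP'
  conv_lhs => rw [hx]
  rw [Int.add_mul_emod_self_left, Int.emod_eq_of_lt (by positivity) (by nlinarith)]

theorem two_mul_sum_range_intCast (P : ℕ) : 2 * ∑ i ∈ range P, (i : ℤ) = P * (P - 1) := by
  induction P with
  | zero => simp
  | succ P ih => rw [sum_range_succ, mul_add, ih]; push_cast; ring

theorem sum_range_mul_eq_sum_sum {M : Type*} [AddCommMonoid M] (f : ℕ → M) (c P : ℕ) :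
    ∑ j ∈ range (c * P), f j = ∑ i ∈ range P, ∑ r ∈ range c, f (i + r * P) := by
  rw [sum_comm]
  induction c with
  | zero => simp
  | succ c ih =>
    rw [Nat.succ_mul, sum_range_add, ih, sum_range_succ]
    simp only [add_comm]

theorem sum_range_emod_add_mul_of_coprime (P : ℕ) (t s : ℤ) (hs : IsCoprime s P) :
    ∑ j ∈ range P, (t + j * s) % P = ∑ i ∈ range P, (i : ℤ) := by
  rcases Nat.eq_zero_or_pos P with rfl | hP
  · simp
  have hP' : (0 : ℤ) < P := by exact_mod_cast hP
  set f : ℕ → ℕ := fun j => ((t + j * s) % P).toNat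
  have hf : ∀ j, (f j : ℤ) = (t + j * s) % P := fun j =>
    Int.toNat_of_nonneg (Int.emod_nonneg _ hP'.ne')
  have hmaps : ∀ j ∈ range P, f j ∈ range P := fun j _ => by
    have := Int.emod_lt_of_pos (t + j * s) hP'
    have := hf j
    rw [mem_range]; omega
  have hinj : Set.InjOn f (range P) := by
    intro x hx y hy hxy
    simp only [coe_range, Set.mem_Iio] at hx hy
    have hdvd : (P : ℤ) ∣ ((y : ℤ) - x) * s := by
      have := Int.ModEq.dvd (a := t + x * s) (b := t + y * s) (n := P)
        (by rw [Int.ModEq, ← hf, ← hf, hxy])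
      convert this using 1; ring
    have := Int.eq_zero_of_abs_lt_dvd (hs.symm.dvd_of_dvd_mul_right hdvd) (by rw [abs_lt]; omega)
    omega
  calc ∑ j ∈ range P, (t + j * s) % P = ∑ j ∈ range P, ((f j : ℕ) : ℤ) := by simp only [hf]
    _ = ∑ i ∈ range P, (i : ℤ) :=
      sum_nbij f hmaps hinj (surjOn_of_injOn_of_card_le f hmaps hinj le_rfl) (fun _ _ => rfl)

theorem sum_range_emod_mul_add_mul (g P : ℕ) (hg : 0 < g) (t s : ℤ) (hs : IsCoprime s P) :
    ∑ j ∈ range P, (t + j * (g * s)) % (g * P : ℤ) = P * (t % g) + g * ∑ i ∈ range P, (i : ℤ) := by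
  have hg' : (g : ℤ) ≠ 0 := by exact_mod_cast hg.ne'
  have hterm : ∀ j : ℕ, (t + j * (g * s)) % (g * P : ℤ) = t % g + g * ((t / g + j * s) % P) := by
    intro j
    rw [Int.emod_mul_eq_emod_add_mul, show t + j * (g * s) = t + g * (j * s) by ring,
      Int.add_mul_emod_self_left, Int.add_mul_ediv_left _ _ hg']
  simp only [hterm, sum_add_distrib, sum_const, card_range, nsmul_eq_mul, ← mul_sum,
    sum_range_emod_add_mul_of_coprime P _ s hs]

theorem Nat.coprime_of_eq_gcd_mul_right {c u v : ℕ} (hc : 0 < c) (h : c = Nat.gcd (u * c) (v * c)) :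
    Nat.Coprime u v := by
  rw [Nat.gcd_mul_right] at h
  exact Nat.eq_of_mul_eq_mul_right hc (h.symm.trans (one_mul c).symm)

theorem coprime_mul_mul_of_eq_gcd {A B N a b n : ℕ} (ha0 : 0 < a) (hb0 : 0 < b)
    (ha : a = Nat.gcd (B * a * b) (N * a * n)) (hb : b = Nat.gcd (A * b * n) (B * a * b)) :
    Nat.Coprime (A * N * n) B := by
  rw [show B * a * b = B * b * a by ring, show N * a * n = N * n * a by ring] at ha
  rw [show A * b * n = A * n * b by ring] at hb
  have hBNn := Nat.coprime_of_eq_gcd_mul_right ha0 ha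
  have hAB := (Nat.coprime_of_eq_gcd_mul_right hb0 hb).coprime_mul_right.coprime_mul_right_right
  exact Nat.Coprime.mul_left (Nat.Coprime.mul_left hAB hBNn.coprime_mul_right.coprime_mul_right_right.symm)
    hBNn.coprime_mul_right.coprime_mul_left_right.symm

theorem hasSum_geometric_weight_affine {p : ℝ} (hp0 : 0 < p) (hp1 : p ≤ 1) (c d : ℝ) :
    HasSum (fun l : ℕ => p * (1 - p) ^ l * (c + l * d)) (c + (1 - p) / p * d) := by
  have hq : ‖1 - p‖ < 1 := by rw [Real.norm_eq_abs, abs_lt]; constructor <;> linarith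
  have h := ((hasSum_geometric_of_lt_one (by linarith) (by linarith : 1 - p < 1)).mul_left (p * c)).add
    ((hasSum_coe_mul_geometric_of_norm_lt_one hq).mul_left (p * d))
  rw [show c + (1 - p) / p * d = p * c * (1 - (1 - p))⁻¹ + p * d * ((1 - p) / (1 - (1 - p)) ^ 2) by
    rw [sub_sub_cancel]; field_simp]
  exact h.congr_fun fun l => by ring

theorem abs_tsum_geometric_weight_sub_le {p : ℝ} (hp0 : 0 < p) (hp1 : p ≤ 1) {S : ℕ → ℝ}
    {c d ε : ℝ} (hS : ∀ l : ℕ, |S l - (c + l * d)| ≤ ε) :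
    |∑' l : ℕ, p * (1 - p) ^ l * S l - (c + (1 - p) / p * d)| ≤ ε := by
  have hw : HasSum (fun l : ℕ => p * (1 - p) ^ l * ε) ε := by
    simpa using hasSum_geometric_weight_affine hp0 hp1 ε 0
  have hbound : ∀ l : ℕ, ‖p * (1 - p) ^ l * (S l - (c + l * d))‖ ≤ p * (1 - p) ^ l * ε := by
    intro l
    have hw0 : 0 ≤ p * (1 - p) ^ l := mul_nonneg hp0.le (pow_nonneg (by linarith) l)
    rw [Real.norm_eq_abs, abs_mul, abs_of_nonneg hw0]
    exact mul_le_mul_of_nonneg_left (hS l) hw0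
  have hdev := (hasSum_geometric_weight_affine hp0 hp1 c d).add
    (Summable.of_norm_bounded hw.summable hbound).hasSum
  rw [show (fun l : ℕ => p * (1 - p) ^ l * S l) = fun l => p * (1 - p) ^ l * (c + l * d) +
    p * (1 - p) ^ l * (S l - (c + l * d)) by funext l; ring, hdev.tsum_eq, add_sub_cancel_left]
  exact tsum_of_norm_bounded hw hbound

theorem abs_sub_div_le_of_abs_sub_le {E F ε : ℝ} (h : |E - F| ≤ ε / 2) (hε : ε < 2 * F) :
    |E - F| / E ≤ ε / (2 * F - ε) := by
  have hE : (2 * F - ε) / 2 ≤ E := by linarith [neg_abs_le (E - F)]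
  calc |E - F| / E ≤ (ε / 2) / ((2 * F - ε) / 2) :=
        div_le_div₀ (by linarith [abs_nonneg (E - F)]) h (by linarith) hE
    _ = ε / (2 * F - ε) := by field_simp

theorem extK_eq (ΔN n : ℕ) : extK ΔN n = 2 + (-(ΔN : ℤ) - 1) % n := by
  have hceil : ⌈((ΔN : ℚ) + 1) / n⌉ = -((-(ΔN : ℤ) - 1) / n) := by
    rw [← Rat.floor_intCast_div_natCast, ← Int.ceil_neg]
    push_cast; ring_nf
  rw [extK, hceil, Int.emod_def]
  ring

theorem two_le_extK (ΔN : ℕ) {n : ℕ} (hn : 0 < n) : 2 ≤ extK ΔN n := by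
  rw [extK_eq]
  have := Int.emod_nonneg (-(ΔN : ℤ) - 1) (by exact_mod_cast hn.ne' : (n : ℤ) ≠ 0)
  omega

def nPhase (A' N' ΔN : ℤ) (k : ℕ) : ℤ := ((k : ℤ) * A' - ΔN - 1) % N'

theorem aoiExt_eq (A' B' N' ΔB ΔN : ℤ) (l k : ℕ) :
    aoiExt A' B' N' ΔB ΔN l k = 2 + l * N' + nPhase A' N' ΔN k +
      (k * A' - ΔB - 2 - l * N' - nPhase A' N' ΔN k) % B' := by
  rw [aoiExt, nPhase, Int.emod_sub_emod]

theorem nPhase_add_mul (A N a b n : ℕ) (ΔN : ℤ) (k r : ℕ) :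
    nPhase (A * b * n) (N * a * n) ΔN (k + r * (a * N)) = nPhase (A * b * n) (N * a * n) ΔN k := by
  rw [nPhase, nPhase, ← Int.add_mul_emod_self_left (k * (A * b * n : ℤ) - ΔN - 1) _ (r * A * b)]
  congr 1; push_cast; ring

theorem sum_range_aoiExt_add_mul {A B N a b n : ℕ} (hab : 0 < a * b)
    (hcop : Nat.Coprime (A * N * n) B) (ΔB ΔN : ℤ) (l k : ℕ) :
    ∑ r ∈ range B, aoiExt (A * b * n) (B * a * b) (N * a * n) ΔB ΔN l (k + r * (a * N)) =
      B * (2 + l * (N * a * n) + nPhase (A * b * n) (N * a * n) ΔN k +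
          (k * (A * b * n) - ΔB - 2 - l * (N * a * n) - nPhase (A * b * n) (N * a * n) ΔN k) %
            (a * b : ℕ)) +
        (a * b : ℕ) * ∑ r ∈ range B, (r : ℤ) := by
  have hterm : ∀ r : ℕ, aoiExt (A * b * n) (B * a * b) (N * a * n) ΔB ΔN l (k + r * (a * N)) =
      (2 + l * (N * a * n) + nPhase (A * b * n) (N * a * n) ΔN k) +
        ((k * (A * b * n) - ΔB - 2 - l * (N * a * n) - nPhase (A * b * n) (N * a * n) ΔN k) +
          r * ((a * b : ℕ) * (A * N * n : ℕ))) % ((a * b : ℕ) * B : ℤ) := by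
    intro r
    rw [aoiExt_eq, nPhase_add_mul]
    congr 2 <;> push_cast <;> ring
  rw [sum_congr rfl fun r _ => hterm r, sum_add_distrib, sum_const, card_range, nsmul_eq_mul,
    sum_range_emod_mul_add_mul _ _ hab _ _ (Nat.isCoprime_iff_coprime.2 hcop)]
  ring

theorem sum_range_nPhase_add_one {A N a b n : ℕ} (hn : 0 < n) (hcop : Nat.Coprime (A * b) (a * N))
    (ΔN : ℤ) :
    ∑ i ∈ range (a * N), nPhase (A * b * n) (N * a * n) ΔN (1 + i) =
      (a * N : ℕ) * ((-ΔN - 1) % n) + n * ∑ i ∈ range (a * N), (i : ℤ) := by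
  have hterm : ∀ i : ℕ, nPhase (A * b * n) (N * a * n) ΔN (1 + i) =
      ((A * b * n - ΔN - 1) + i * (n * (A * b : ℕ))) % (n * (a * N : ℕ) : ℤ) := by
    intro i
    rw [nPhase]; push_cast; ring_nf
  rw [sum_congr rfl fun i _ => hterm i,
    sum_range_emod_mul_add_mul _ _ hn _ _ (Nat.isCoprime_iff_coprime.2 hcop),
    show (A * b * n - ΔN - 1 : ℤ) = (-ΔN - 1) + n * (A * b) by ring, Int.add_mul_emod_self_left]

theorem abs_two_mul_sum_aoiExt_sub_le {A B N a b n : ℕ} (hab : 0 < a * b) (hn : 0 < n)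
    (hcopN : Nat.Coprime (A * b) (a * N)) (hcopB : Nat.Coprime (A * N * n) B) (ΔB ΔN : ℤ) (l : ℕ) :
    |2 * ∑ k ∈ Icc 1 (a * B * N), aoiExt (A * b * n) (B * a * b) (N * a * n) ΔB ΔN l k -
        (a * B * N : ℤ) * (B * a * b + N * a * n - n + 2 * (2 + (-ΔN - 1) % n) +
          2 * l * (N * a * n))| ≤ (a * B * N : ℤ) * (a * b) := by
  set φ := nPhase (A * b * n) (N * a * n) ΔN
  set res : ℕ → ℤ := fun i =>
    ((1 + i : ℕ) * (A * b * n) - ΔB - 2 - l * (N * a * n) - φ (1 + i)) % (a * b : ℕ)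
  have hab' : (0 : ℤ) < (a * b : ℕ) := by exact_mod_cast hab
  have hsum : ∑ k ∈ Icc 1 (a * B * N), aoiExt (A * b * n) (B * a * b) (N * a * n) ΔB ΔN l k =
      B * ((a * N : ℕ) * (2 + l * (N * a * n)) + ∑ i ∈ range (a * N), φ (1 + i) +
        ∑ i ∈ range (a * N), res i) + (a * N : ℕ) * ((a * b : ℕ) * ∑ r ∈ range B, (r : ℤ)) := by
    rw [← Ico_add_one_right_eq_Icc, sum_Ico_eq_sum_range, Nat.add_sub_cancel,
      show a * B * N = B * (a * N) by ring, sum_range_mul_eq_sum_sum]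
    simp only [← add_assoc, sum_range_aoiExt_add_mul hab hcopB, sum_add_distrib, sum_const,
      card_range, nsmul_eq_mul, ← mul_sum]
    ring
  have hres_nonneg : 0 ≤ ∑ i ∈ range (a * N), res i :=
    sum_nonneg fun i _ => Int.emod_nonneg _ hab'.ne'
  have hres_le : ∑ i ∈ range (a * N), res i ≤ (a * N : ℕ) * ((a * b : ℕ) - 1) := by
    calc ∑ i ∈ range (a * N), res i ≤ ∑ i ∈ range (a * N), ((a * b : ℕ) - 1 : ℤ) :=
          sum_le_sum fun i _ => Int.le_sub_one_of_lt (Int.emod_lt_of_pos _ hab')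
      _ = _ := by rw [sum_const, card_range, nsmul_eq_mul]
  have hB : (0 : ℤ) ≤ B := by positivity
  have hdiff : 2 * ∑ k ∈ Icc 1 (a * B * N),
        aoiExt (A * b * n) (B * a * b) (N * a * n) ΔB ΔN l k -
      (a * B * N : ℤ) * (B * a * b + N * a * n - n + 2 * (2 + (-ΔN - 1) % n) +
        2 * l * (N * a * n)) = 2 * B * ∑ i ∈ range (a * N), res i - (a * B * N : ℤ) * (a * b) := by
    have gaussN := two_mul_sum_range_intCast (a * N)
    rw [hsum, sum_range_nPhase_add_one hn hcopN]
    push_cast at gaussN ⊢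
    linear_combination (B * n) * gaussN + (a * N * a * b) * two_mul_sum_range_intCast B
  have hR := mul_le_mul_of_nonneg_left hres_le hB
  have hM : (0 : ℤ) ≤ a * B * N := by positivity
  push_cast at hR
  rw [hdiff, abs_le]
  constructor <;> linarith [mul_nonneg hB hres_nonneg]

theorem abs_meanAoiExt_sub_le {A B N a b n : ℕ} (hB : 0 < B) (hN : 0 < N) (ha : 0 < a)
    (hb : 0 < b) (hn : 0 < n) (hcopN : Nat.Coprime (A * b) (a * N))
    (hcopB : Nat.Coprime (A * N * n) B) (ΔB ΔN l : ℕ) :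
    |meanAoiExt A B N a b n ΔB ΔN l -
        (((B : ℝ) * a * b + (N : ℝ) * a * n - n) / 2 + (extK ΔN n : ℝ) + l * ((N : ℝ) * a * n))| ≤
      (a : ℝ) * b / 2 := by
  have h := abs_two_mul_sum_aoiExt_sub_le (Nat.mul_pos ha hb) hn hcopN hcopB ΔB ΔN l
  rw [← extK_eq] at h
  set S := ∑ k ∈ Icc 1 (a * B * N), aoiExt (A * b * n) (B * a * b) (N * a * n) ΔB ΔN l k
  have hM : (0 : ℝ) < a * B * N := by positivity
  have hR : |2 * (S : ℝ) - a * B * N * (B * a * b + N * a * n - n + 2 * extK ΔN n +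
      2 * l * (N * a * n))| ≤ a * B * N * (a * b) := by exact_mod_cast h
  rw [meanAoiExt, ← Int.cast_sum]
  calc _ = |2 * (S : ℝ) - a * B * N * (B * a * b + N * a * n - n + 2 * extK ΔN n +
        2 * l * (N * a * n))| / (2 * (a * B * N)) := by
        rw [← abs_of_pos (by positivity : (0 : ℝ) < 2 * (a * B * N)), ← abs_div]
        congr 1; field_simp; ring
    _ ≤ a * B * N * (a * b) / (2 * (a * B * N)) := by gcongr
    _ = a * b / 2 := by field_simp

theorem stmt16_general (A B N a b n : ℕ) (hB : 0 < B) (hN : 0 < N)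
    (hapos : 0 < a) (hbpos : 0 < b) (hnpos : 0 < n)
    (ha : a = Nat.gcd (B * a * b) (N * a * n))
    (hb : b = Nat.gcd (A * b * n) (B * a * b))
    (hn : n = Nat.gcd (A * b * n) (N * a * n))
    (ΔB ΔN : ℕ) (p : ℝ) (hp0 : 0 < p) (hp1 : p ≤ 1) :
    |expAoiExt A B N a b n ΔB ΔN p -
          (((B : ℝ) * a * b + (N : ℝ) * a * n - n) / 2 + (extK ΔN n : ℝ) +
            ((1 - p) / p) * ((N : ℝ) * a * n))| /
        expAoiExt A B N a b n ΔB ΔN p ≤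
      ((a : ℝ) * b) /
        (((B : ℝ) - 1) * ((a : ℝ) * b) + (n : ℝ) * ((a : ℝ) * N - 1) +
          2 * ((extK ΔN n : ℝ) + ((1 - p) / p) * ((N : ℝ) * a * n))) := by
  have hcopN : Nat.Coprime (A * b) (a * N) :=
    Nat.mul_comm N a ▸ Nat.coprime_of_eq_gcd_mul_right hnpos hn
  have hcopB := coprime_mul_mul_of_eq_gcd hapos hbpos ha hb
  have hE := abs_tsum_geometric_weight_sub_le hp0 hp1
    (abs_meanAoiExt_sub_le hB hN hapos hbpos hnpos hcopN hcopB ΔB ΔN)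
  have hK : (2 : ℝ) ≤ extK ΔN n := by exact_mod_cast two_le_extK ΔN hnpos
  have hB1 : (1 : ℝ) ≤ B := by exact_mod_cast hB
  have haN : (1 : ℝ) ≤ a * N := by exact_mod_cast Nat.mul_pos hapos hN
  have hw : 0 ≤ (1 - p) / p * ((N : ℝ) * a * n) := by
    have : 0 ≤ 1 - p := by linarith
    positivity
  refine (abs_sub_div_le_of_abs_sub_le hE ?_).trans_eq (by ring_nf)
  nlinarith [mul_nonneg (sub_nonneg.2 hB1) (by positivity : (0 : ℝ) ≤ a * b),
    mul_nonneg (by positivity : (0 : ℝ) ≤ n) (sub_nonneg.2 haN)]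

/-- Corollary 2, eq. (18): the relative error of the approximation
`Ê = (B' + N' − n)/2 + K + (p̄/p)·N'` of the expected AoI `E` of the extended
model is at most `a·b / ((B−1)·a·b + n·(a·N − 1) + 2·(K + (p̄/p)·N'))`. -/
theorem stmt16 (A B N a b n : ℕ) (hA : 0 < A) (hB : 0 < B) (hN : 0 < N)
    (hapos : 0 < a) (hbpos : 0 < b) (hnpos : 0 < n)
    (ha : a = Nat.gcd (B * a * b) (N * a * n))
    (hb : b = Nat.gcd (A * b * n) (B * a * b))
    (hn : n = Nat.gcd (A * b * n) (N * a * n))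
    (ΔB ΔN : ℕ) (p : ℝ) (hp0 : 0 < p) (hp1 : p ≤ 1) :
    |expAoiExt A B N a b n ΔB ΔN p -
          (((B : ℝ) * a * b + (N : ℝ) * a * n - n) / 2 + (extK ΔN n : ℝ) +
            ((1 - p) / p) * ((N : ℝ) * a * n))| /
        expAoiExt A B N a b n ΔB ΔN p ≤
      ((a : ℝ) * b) /
        (((B : ℝ) - 1) * ((a : ℝ) * b) + (n : ℝ) * ((a : ℝ) * N - 1) +
          2 * ((extK ΔN n : ℝ) + ((1 - p) / p) * ((N : ℝ) * a * n))) :=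
  stmt16_general A B N a b n hB hN hapos hbpos hnpos ha hb hn ΔB ΔN p hp0 hp1
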